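/- Let Γ be a finite simple graph on vertex set V, let v ∈ V, and let A, B ⊆ V satisfy A ∪ B = V and A ∩ B = {v}, such that every edge of Γ has both endpoints in A or both endpoints in B (Γ is the wedge of Γ₁ := Γ|_A and Γ₂ := Γ|_B at v). Then, as an identity in ℤ[q], Σ over all flats F of Γ of a(Γ/F)·q^{rk(F)} = (Σ over all flats F₁ of Γ₁ of a(Γ₁/F₁)·q^{rk(F₁)}) · (Σ over all flats F₂ of Γ₂ of a(Γ₂/F₂)·q^{rk(F₂)}). -/

import Mathlib

open Polynomial

/-- The graphical zonotope of `G`, as the Minkowski sum over the edges `{i,j}` of `G`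
of the segments `[-(e_i - e_j), e_i - e_j]`, described via antisymmetric coefficient
functions supported on edges. -/
def graphicalZonotope {V : Type} [Fintype V] [DecidableEq V] (G : SimpleGraph V) :
    Set (V → ℝ) :=
  { x | ∃ c : V → V → ℝ, (∀ u v, c u v = - c v u) ∧ (∀ u v, ¬ G.Adj u v → c u v = 0) ∧
      (∀ u v, |c u v| ≤ 1) ∧ x = fun w => ∑ u, c w u }

/-- `faceCount G k` is the number of nonempty exposed faces of the graphical zonotope of `G`
whose affine span has dimension `k`. -/
noncomputable def faceCount {V : Type} [Fintype V] [DecidableEq V] (G : SimpleGraph V)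
    (k : ℕ) : ℕ :=
  Nat.card { F : Set (V → ℝ) // F.Nonempty ∧ IsExposed ℝ (graphicalZonotope G) F ∧
      Module.finrank ℝ (affineSpan ℝ F).direction = k }

/-- The number of acyclic orientations of `G`. -/
noncomputable def acyclicOrientationCount {V : Type} (G : SimpleGraph V) : ℕ :=
  Nat.card { r : V → V → Prop // (∀ u v, r u v → G.Adj u v) ∧
      (∀ u v, G.Adj u v → Xor' (r u v) (r v u)) ∧ (∀ v, ¬ Relation.TransGen r v v) }

/-- rank of the induced subgraph on `s` : `|s| - #components`. -/
noncomputable def inducedRank {V : Type} (G : SimpleGraph V) (s : Set V) : ℕ :=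
  Nat.card s - Nat.card (G.induce s).ConnectedComponent

/-- The `q`-analog of the chromatic polynomial evaluated at `d` colors, an element of `ℤ[q]`. -/
noncomputable def chromQ {V : Type} [Fintype V] [DecidableEq V] (G : SimpleGraph V) (d : ℕ) : Polynomial ℤ :=
  ∑ f : V → Fin d, (X : Polynomial ℤ) ^ (∑ i : Fin d, inducedRank G (f ⁻¹' {i}))

/-- `H` is (the spanning subgraph determined by) a flat of `G`. -/
def IsFlatOf {V : Type} (G H : SimpleGraph V) : Prop :=
  H ≤ G ∧ ∀ u v, G.Adj u v → H.Reachable u v → H.Adj u v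

/-- The rank of a spanning subgraph `H`: `|V| - c(H)`. -/
noncomputable def flatRank {V : Type} [Fintype V] (H : SimpleGraph V) : ℕ :=
  Fintype.card V - Nat.card H.ConnectedComponent

/-- The contraction `G/H`: vertices are the connected components of `H`, two distinct
components being adjacent iff some edge of `G` joins them. -/
def contractFlat {V : Type} (G H : SimpleGraph V) : SimpleGraph H.ConnectedComponent where
  Adj C D := C ≠ D ∧ ∃ u v, G.Adj u v ∧ H.connectedComponentMk u = C ∧
      H.connectedComponentMk v = D
  symm := by
    constructor
    rintro C D ⟨hne, u, v, hadj, hu, hv⟩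
    exact ⟨hne.symm, v, u, hadj.symm, hv, hu⟩
  loopless := by constructor; rintro C ⟨hne, -⟩; exact hne rfl

/-! A flat `H` of the wedge `Γ` is the same thing as a pair of flats `H|A`, `H|B` of the two
sides, and `rk H = rk H|A + rk H|B` because `|A| + |B| = |V| + 1` and, likewise, the components
of `H|A` and `H|B` cover those of `H` with only the component of `v` counted twice. The
contraction `Γ/H` is again a wedge, of `Γ|A / H|A` and `Γ|B / H|B` at the component of `v`, and
the acyclic orientations of a wedge are exactly the pairs of acyclic orientations of its two
sides. Hence the sum factors term by term. -/

open Relation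

lemma Relation.not_transGen_self_of_lt {α β : Type*} [Preorder β] {r : α → α → Prop}
    (f : α → β) (h : ∀ a b, r a b → f a < f b) (a : α) : ¬ TransGen r a a :=
  fun ha => lt_irrefl (f a) (by simpa [transGen_eq_self] using ha.lift f h)

lemma Relation.exists_lt_of_not_transGen_self {α : Type*} [Finite α] {r : α → α → Prop}
    (h : ∀ a, ¬ TransGen r a a) : ∃ f : α → ℕ, ∀ a b, r a b → f a < f b := by
  refine ⟨fun a => {x | TransGen r x a}.ncard, fun a b hab => Set.ncard_lt_ncard ?_⟩
  exact ⟨fun x hx => hx.tail hab, fun hsub => h a (hsub (TransGen.single hab))⟩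

lemma Set.card_add_card_of_union_of_inter {α : Type*} [Finite α] {S T : Set α} {a : α}
    (hU : S ∪ T = univ) (hI : S ∩ T = {a}) : Nat.card S + Nat.card T = Nat.card α + 1 := by
  have := Set.ncard_union_add_ncard_inter S T
  rw [hU, hI, Set.ncard_univ, Set.ncard_singleton, ← Nat.card_coe_set_eq,
    ← Nat.card_coe_set_eq] at this
  exact this.symm

lemma finsum_mem_mul_finsum_mem {α β R : Type*} [NonUnitalNonAssocSemiring R]
    {s : Set α} {t : Set β} (hs : s.Finite) (ht : t.Finite) (f : α → R) (g : β → R) :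
    (∑ᶠ a ∈ s, f a) * ∑ᶠ b ∈ t, g b = ∑ᶠ p ∈ s ×ˢ t, f p.1 * g p.2 := by
  rw [finsum_mem_eq_finite_toFinset_sum _ hs, finsum_mem_eq_finite_toFinset_sum _ ht,
    finsum_mem_eq_finite_toFinset_sum _ (hs.prod ht), ← hs.toFinset_prod ht,
    Finset.sum_mul_sum, Finset.sum_product]

section Glue

variable {W : Type*} {S T : Set W}

def glueRel (r₁ : S → S → Prop) (r₂ : T → T → Prop) (u w : W) : Prop :=
  (∃ (hu : u ∈ S) (hw : w ∈ S), r₁ ⟨u, hu⟩ ⟨w, hw⟩) ∨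
    (∃ (hu : u ∈ T) (hw : w ∈ T), r₂ ⟨u, hu⟩ ⟨w, hw⟩)

lemma glueRel_comm (r₁ : S → S → Prop) (r₂ : T → T → Prop) :
    glueRel r₁ r₂ = glueRel r₂ r₁ := by
  funext u w
  exact propext or_comm

lemma glueRel_restrict {r : W → W → Prop}
    (hr : ∀ ⦃u w⦄, r u w → u ∈ S ∧ w ∈ S ∨ u ∈ T ∧ w ∈ T) :
    glueRel (fun a b : S => r a b) (fun a b : T => r a b) = r := by
  funext u w
  refine propext ⟨?_, fun huw => ?_⟩
  · rintro (⟨_, _, huw⟩ | ⟨_, _, huw⟩) <;> exact huw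
  · rcases hr huw with ⟨hu, hw⟩ | ⟨hu, hw⟩
    exacts [Or.inl ⟨hu, hw, huw⟩, Or.inr ⟨hu, hw, huw⟩]

lemma glueRel_restrict_left (hST : (S ∩ T).Subsingleton) {r₁ : S → S → Prop}
    {r₂ : T → T → Prop} (h₂ : ∀ a, ¬ r₂ a a) :
    (fun a b : S => glueRel r₁ r₂ a b) = r₁ := by
  funext a b
  refine propext ⟨?_, fun hab => Or.inl ⟨a.2, b.2, hab⟩⟩
  rintro (⟨_, _, hab⟩ | ⟨ha, hb, hab⟩)
  · exact hab
  · have hba : (⟨b, hb⟩ : T) = ⟨a, ha⟩ := Subtype.ext (hST ⟨b.2, hb⟩ ⟨a.2, ha⟩)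
    exact (h₂ _ (hba ▸ hab)).elim

lemma glueRel_restrict_right (hST : (S ∩ T).Subsingleton) {r₁ : S → S → Prop}
    {r₂ : T → T → Prop} (h₁ : ∀ a, ¬ r₁ a a) :
    (fun a b : T => glueRel r₁ r₂ a b) = r₂ := by
  rw [glueRel_comm]
  exact glueRel_restrict_left (Set.inter_comm S T ▸ hST) h₁

lemma not_transGen_self_glueRel [Finite W] {w₀ : W} (hST : S ∩ T = {w₀})
    {r₁ : S → S → Prop} {r₂ : T → T → Prop} (h₁ : ∀ a, ¬ TransGen r₁ a a)
    (h₂ : ∀ a, ¬ TransGen r₂ a a) (x : W) : ¬ TransGen (glueRel r₁ r₂) x x := by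
  classical
  obtain ⟨f₁, hf₁⟩ := exists_lt_of_not_transGen_self h₁
  obtain ⟨f₂, hf₂⟩ := exists_lt_of_not_transGen_self h₂
  obtain ⟨hS, hT⟩ : w₀ ∈ S ∩ T := hST ▸ rfl
  -- potentials on the two sides, normalised to vanish at the common vertex, glue to one on `W`
  let F : W → ℤ := fun x =>
    if hx : x ∈ S then f₁ ⟨x, hx⟩ - f₁ ⟨w₀, hS⟩
    else if hx : x ∈ T then f₂ ⟨x, hx⟩ - f₂ ⟨w₀, hT⟩ else 0
  have hF_right (x : W) (hx : x ∈ T) : F x = f₂ ⟨x, hx⟩ - f₂ ⟨w₀, hT⟩ := by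
    by_cases hxS : x ∈ S
    · obtain rfl : x = w₀ := hST.subset ⟨hxS, hx⟩
      simp [F, hxS]
    · simp [F, hxS, hx]
  refine not_transGen_self_of_lt F ?_ x
  rintro a b (⟨ha, hb, hab⟩ | ⟨ha, hb, hab⟩)
  · have := hf₁ _ _ hab
    simp only [F, dif_pos ha, dif_pos hb]
    omega
  · have := hf₂ _ _ hab
    rw [hF_right a ha, hF_right b hb]
    omega

def glueGraph (H₁ : SimpleGraph S) (H₂ : SimpleGraph T) : SimpleGraph W where
  Adj := glueRel H₁.Adj H₂.Adj
  symm := by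
    constructor
    rintro u w (⟨hu, hw, h⟩ | ⟨hu, hw, h⟩)
    exacts [Or.inl ⟨hw, hu, h.symm⟩, Or.inr ⟨hw, hu, h.symm⟩]
  loopless := by
    constructor
    rintro u (⟨_, _, h⟩ | ⟨_, _, h⟩) <;> exact h.ne rfl

lemma glueGraph_comm (H₁ : SimpleGraph S) (H₂ : SimpleGraph T) :
    glueGraph H₁ H₂ = glueGraph H₂ H₁ :=
  SimpleGraph.ext (glueRel_comm H₁.Adj H₂.Adj)

lemma glueGraph_induce_left (hST : (S ∩ T).Subsingleton) (H₁ : SimpleGraph S)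
    (H₂ : SimpleGraph T) : (glueGraph H₁ H₂).induce S = H₁ :=
  SimpleGraph.ext (glueRel_restrict_left (r₁ := H₁.Adj) hST fun _ => H₂.irrefl)

lemma glueGraph_induce_right (hST : (S ∩ T).Subsingleton) (H₁ : SimpleGraph S)
    (H₂ : SimpleGraph T) : (glueGraph H₁ H₂).induce T = H₂ := by
  rw [glueGraph_comm]
  exact glueGraph_induce_left (Set.inter_comm S T ▸ hST) H₂ H₁

end Glue

def IsAcyclicOrientation {V : Type*} (G : SimpleGraph V) (r : V → V → Prop) : Prop :=
  (∀ u v, r u v → G.Adj u v) ∧ (∀ u v, G.Adj u v → Xor (r u v) (r v u)) ∧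
    ∀ v, ¬ TransGen r v v

lemma acyclicOrientationCount_eq_card {V : Type} (G : SimpleGraph V) :
    acyclicOrientationCount G = Nat.card {r // IsAcyclicOrientation G r} := rfl

namespace IsAcyclicOrientation

variable {V V' : Type*} {G : SimpleGraph V} {G' : SimpleGraph V'} {r : V' → V' → Prop}

lemma irrefl (h : IsAcyclicOrientation G' r) (a : V') : ¬ r a a :=
  fun haa => (h.1 a a haa).ne rfl

lemma comap (h : IsAcyclicOrientation G' r) (f : G ↪g G') :
    IsAcyclicOrientation G (fun a b => r (f a) (f b)) :=
  ⟨fun _ _ hab => f.map_adj_iff.mp (h.1 _ _ hab), fun _ _ hab => h.2.1 _ _ (f.map_adj_iff.mpr hab),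
    fun a ha => h.2.2 (f a) (ha.lift f fun _ _ => id)⟩

end IsAcyclicOrientation

lemma acyclicOrientationCount_congr {V V' : Type} {G : SimpleGraph V} {G' : SimpleGraph V'}
    (e : G ≃g G') : acyclicOrientationCount G = acyclicOrientationCount G' := by
  simp only [acyclicOrientationCount_eq_card]
  exact Nat.card_congr
    { toFun := fun r => ⟨_, r.2.comap e.symm.toEmbedding⟩
      invFun := fun r => ⟨_, r.2.comap e.toEmbedding⟩
      left_inv := fun r => by ext; simp
      right_inv := fun r => by ext; simp }

namespace SimpleGraph

variable {W : Type} {S T : Set W} {w₀ : W}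

structure IsWedge (G : SimpleGraph W) (S T : Set W) (w₀ : W) : Prop where
  union_eq : S ∪ T = Set.univ
  inter_eq : S ∩ T = {w₀}
  adj_mem : ∀ ⦃u w⦄, G.Adj u w → u ∈ S ∧ w ∈ S ∨ u ∈ T ∧ w ∈ T

namespace IsWedge

variable {G H : SimpleGraph W}

lemma symm (hG : G.IsWedge S T w₀) : G.IsWedge T S w₀ :=
  ⟨Set.union_comm S T ▸ hG.union_eq, Set.inter_comm S T ▸ hG.inter_eq,
    fun _ _ h => (hG.adj_mem h).symm⟩

lemma mono (hG : G.IsWedge S T w₀) (hH : H ≤ G) : H.IsWedge S T w₀ :=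
  ⟨hG.union_eq, hG.inter_eq, fun _ _ h => hG.adj_mem (hH h)⟩

lemma left_mem (hG : G.IsWedge S T w₀) : w₀ ∈ S := (hG.inter_eq.symm ▸ rfl : w₀ ∈ S ∩ T).1

lemma eq_of_mem (hG : G.IsWedge S T w₀) {x : W} (hS : x ∈ S) (hT : x ∈ T) : x = w₀ :=
  hG.inter_eq.subset ⟨hS, hT⟩

lemma subsingleton_inter (hG : G.IsWedge S T w₀) : (S ∩ T).Subsingleton :=
  hG.inter_eq ▸ Set.subsingleton_singleton

lemma isAcyclicOrientation_glueRel [Finite W] (hG : G.IsWedge S T w₀) {r₁ : S → S → Prop}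
    {r₂ : T → T → Prop} (h₁ : IsAcyclicOrientation (G.induce S) r₁)
    (h₂ : IsAcyclicOrientation (G.induce T) r₂) : IsAcyclicOrientation G (glueRel r₁ r₂) := by
  have restrict_left := glueRel_restrict_left (r₁ := r₁) hG.subsingleton_inter h₂.irrefl
  have restrict_right := glueRel_restrict_right (r₂ := r₂) hG.subsingleton_inter h₁.irrefl
  refine ⟨?_, fun u w huw => ?_, not_transGen_self_glueRel hG.inter_eq h₁.2.2 h₂.2.2⟩
  · rintro u w (⟨_, _, h⟩ | ⟨_, _, h⟩)
    exacts [h₁.1 _ _ h, h₂.1 _ _ h]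
  · rcases hG.adj_mem huw with ⟨hu, hw⟩ | ⟨hu, hw⟩
    · have := h₁.2.1 ⟨u, hu⟩ ⟨w, hw⟩ huw
      rwa [← restrict_left] at this
    · have := h₂.2.1 ⟨u, hu⟩ ⟨w, hw⟩ huw
      rwa [← restrict_right] at this

lemma acyclicOrientationCount_eq_mul [Finite W] (hG : G.IsWedge S T w₀) :
    acyclicOrientationCount G =
      acyclicOrientationCount (G.induce S) * acyclicOrientationCount (G.induce T) := by
  simp only [acyclicOrientationCount_eq_card, ← Nat.card_prod]
  exact Nat.card_congr
    { toFun := fun r =>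
        (⟨_, r.2.comap (Embedding.induce S)⟩, ⟨_, r.2.comap (Embedding.induce T)⟩)
      invFun := fun p => ⟨_, hG.isAcyclicOrientation_glueRel p.1.2 p.2.2⟩
      left_inv := fun r => Subtype.ext (glueRel_restrict fun _ _ h => hG.adj_mem (r.2.1 _ _ h))
      right_inv := fun p => Prod.ext
        (Subtype.ext (glueRel_restrict_left hG.subsingleton_inter p.2.2.irrefl))
        (Subtype.ext (glueRel_restrict_right hG.subsingleton_inter p.1.2.irrefl)) }

end IsWedge

def componentIncl (H : SimpleGraph W) (S : Set W) :
    (H.induce S).ConnectedComponent → H.ConnectedComponent :=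
  ConnectedComponent.map (Embedding.induce S).toHom

@[simp]
lemma componentIncl_mk (H : SimpleGraph W) {S : Set W} (a : S) :
    H.componentIncl S ((H.induce S).connectedComponentMk a) = H.connectedComponentMk a := rfl

/-- Collapsing everything outside `S` onto `w₀` is constant on the components of a wedge; this is
what transfers reachability in `H` to `H.induce S`. -/
noncomputable def retract (H : SimpleGraph W) {S : Set W} {w₀ : W} (hw₀ : w₀ ∈ S) (x : W) :
    (H.induce S).ConnectedComponent := by
  classical
  exact if hx : x ∈ S then (H.induce S).connectedComponentMk ⟨x, hx⟩
    else (H.induce S).connectedComponentMk ⟨w₀, hw₀⟩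

lemma retract_of_mem (H : SimpleGraph W) (hw₀ : w₀ ∈ S) {x : W} (hx : x ∈ S) :
    H.retract hw₀ x = (H.induce S).connectedComponentMk ⟨x, hx⟩ := by
  simp [retract, hx]

namespace IsWedge

variable {G H : SimpleGraph W}

lemma retract_of_mem_right (hH : H.IsWedge S T w₀) {x : W} (hx : x ∈ T) :
    H.retract hH.left_mem x = (H.induce S).connectedComponentMk ⟨w₀, hH.left_mem⟩ := by
  by_cases hxS : x ∈ S
  · obtain rfl := hH.eq_of_mem hxS hx
    exact H.retract_of_mem _ hxS
  · simp [retract, hxS]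

lemma retract_eq_of_reachable (hH : H.IsWedge S T w₀) {u w : W} (h : H.Reachable u w) :
    H.retract hH.left_mem u = H.retract hH.left_mem w := by
  have hstep (u w : W) (huw : H.Adj u w) : H.retract hH.left_mem u = H.retract hH.left_mem w := by
    rcases hH.adj_mem huw with ⟨hu, hw⟩ | ⟨hu, hw⟩
    · rw [H.retract_of_mem _ hu, H.retract_of_mem _ hw]
      exact ConnectedComponent.sound (Adj.reachable (G := H.induce S) huw)
    · rw [hH.retract_of_mem_right hu, hH.retract_of_mem_right hw]
  have := ((reachable_iff_reflTransGen u w).mp h).lift (p := (· = ·)) _ hstep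
  rwa [reflTransGen_eq_self] at this

lemma reachable_induce (hH : H.IsWedge S T w₀) {u w : W} (hu : u ∈ S) (hw : w ∈ S)
    (h : H.Reachable u w) : (H.induce S).Reachable ⟨u, hu⟩ ⟨w, hw⟩ := by
  have := hH.retract_eq_of_reachable h
  rw [H.retract_of_mem _ hu, H.retract_of_mem _ hw] at this
  exact ConnectedComponent.exact this

lemma componentIncl_injective (hH : H.IsWedge S T w₀) :
    Function.Injective (H.componentIncl S) := by
  intro c d
  refine ConnectedComponent.ind₂ (fun a b hab => ?_) c d
  rw [componentIncl_mk, componentIncl_mk] at hab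
  exact ConnectedComponent.sound (hH.reachable_induce a.2 b.2 (ConnectedComponent.exact hab))

lemma eq_of_mk_eq_componentIncl (hH : H.IsWedge S T w₀) {x : W} (hx : x ∈ T)
    {c : (H.induce S).ConnectedComponent} (h : H.connectedComponentMk x = H.componentIncl S c) :
    c = (H.induce S).connectedComponentMk ⟨w₀, hH.left_mem⟩ := by
  induction c using ConnectedComponent.ind with | h a => ?_
  rw [componentIncl_mk] at h
  have := hH.retract_eq_of_reachable (ConnectedComponent.exact h)
  rw [hH.retract_of_mem_right hx, H.retract_of_mem _ a.2] at this
  exact this.symm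

lemma range_componentIncl_union (hH : H.IsWedge S T w₀) :
    Set.range (H.componentIncl S) ∪ Set.range (H.componentIncl T) = Set.univ := by
  refine Set.eq_univ_of_forall fun C => ?_
  induction C using ConnectedComponent.ind with | h x => ?_
  rcases (Set.ext_iff.mp hH.union_eq x).mpr trivial with hx | hx
  exacts [Or.inl ⟨_, componentIncl_mk H ⟨x, hx⟩⟩, Or.inr ⟨_, componentIncl_mk H ⟨x, hx⟩⟩]

lemma range_componentIncl_inter (hH : H.IsWedge S T w₀) :
    Set.range (H.componentIncl S) ∩ Set.range (H.componentIncl T) =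
      {H.connectedComponentMk w₀} := by
  refine Set.eq_singleton_iff_unique_mem.mpr
    ⟨⟨⟨_, componentIncl_mk H ⟨w₀, hH.left_mem⟩⟩, ⟨_, componentIncl_mk H ⟨w₀, hH.symm.left_mem⟩⟩⟩,
      ?_⟩
  rintro _ ⟨⟨c, rfl⟩, ⟨d, hd⟩⟩
  induction d using ConnectedComponent.ind with | h b => ?_
  rw [hH.eq_of_mk_eq_componentIncl b.2 hd]
  rfl

lemma card_connectedComponent_add [Finite W] (hH : H.IsWedge S T w₀) :
    Nat.card (H.induce S).ConnectedComponent + Nat.card (H.induce T).ConnectedComponent =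
      Nat.card H.ConnectedComponent + 1 := by
  rw [← Nat.card_range_of_injective hH.componentIncl_injective,
    ← Nat.card_range_of_injective hH.symm.componentIncl_injective]
  exact Set.card_add_card_of_union_of_inter hH.range_componentIncl_union
    hH.range_componentIncl_inter

lemma flatRank_eq_add [Fintype W] [Fintype S] [Fintype T] (hH : H.IsWedge S T w₀) :
    flatRank H = flatRank (H.induce S) + flatRank (H.induce T) := by
  have hV := Set.card_add_card_of_union_of_inter hH.union_eq hH.inter_eq
  have hC := hH.card_connectedComponent_add
  have hS : Nat.card (H.induce S).ConnectedComponent ≤ Nat.card S :=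
    Nat.card_le_card_of_surjective _ Quot.mk_surjective
  have hT : Nat.card (H.induce T).ConnectedComponent ≤ Nat.card T :=
    Nat.card_le_card_of_surjective _ Quot.mk_surjective
  simp only [flatRank, Fintype.card_eq_nat_card]
  omega

lemma isWedge_contractFlat (hG : G.IsWedge S T w₀) (hH : H ≤ G) :
    (contractFlat G H).IsWedge (Set.range (H.componentIncl S)) (Set.range (H.componentIncl T))
      (H.connectedComponentMk w₀) := by
  refine ⟨(hG.mono hH).range_componentIncl_union, (hG.mono hH).range_componentIncl_inter, ?_⟩
  rintro _ _ ⟨-, u, w, huw, rfl, rfl⟩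
  rcases hG.adj_mem huw with ⟨hu, hw⟩ | ⟨hu, hw⟩
  exacts [Or.inl ⟨⟨_, componentIncl_mk H ⟨u, hu⟩⟩, ⟨_, componentIncl_mk H ⟨w, hw⟩⟩⟩,
    Or.inr ⟨⟨_, componentIncl_mk H ⟨u, hu⟩⟩, ⟨_, componentIncl_mk H ⟨w, hw⟩⟩⟩]

noncomputable def contractFlatInduceIso (hG : G.IsWedge S T w₀) (hH : H ≤ G) :
    contractFlat (G.induce S) (H.induce S) ≃g
      (contractFlat G H).induce (Set.range (H.componentIncl S)) where
  toEquiv := Equiv.ofInjective _ (hG.mono hH).componentIncl_injective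
  map_rel_iff' {c d} := by
    have hinj := (hG.mono hH).componentIncl_injective
    refine ⟨fun ⟨hne, u, w, huw, hu, hw⟩ => ?_, fun ⟨hne, a, b, hab, ha, hb⟩ => ?_⟩
    · rcases hG.adj_mem huw with ⟨huS, hwS⟩ | ⟨huT, hwT⟩
      · exact ⟨fun hcd => hne (by rw [hcd]), ⟨u, huS⟩, ⟨w, hwS⟩, huw, hinj hu, hinj hw⟩
      · have hcd : c = d := ((hG.mono hH).eq_of_mk_eq_componentIncl huT hu).trans
          ((hG.mono hH).eq_of_mk_eq_componentIncl hwT hw).symm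
        exact (hne (by rw [hcd])).elim
    · exact ⟨fun hcd => hne (hinj hcd), a, b, hab,
        ha ▸ componentIncl_mk H a, hb ▸ componentIncl_mk H b⟩

lemma acyclicOrientationCount_contractFlat [Finite W] (hG : G.IsWedge S T w₀) (hH : H ≤ G) :
    acyclicOrientationCount (contractFlat G H) =
      acyclicOrientationCount (contractFlat (G.induce S) (H.induce S)) *
        acyclicOrientationCount (contractFlat (G.induce T) (H.induce T)) := by
  rw [(hG.isWedge_contractFlat hH).acyclicOrientationCount_eq_mul,
    ← acyclicOrientationCount_congr (hG.contractFlatInduceIso hH),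
    ← acyclicOrientationCount_congr (hG.symm.contractFlatInduceIso hH)]

lemma isWedge_glueGraph (hG : G.IsWedge S T w₀) (H₁ : SimpleGraph S) (H₂ : SimpleGraph T) :
    (glueGraph H₁ H₂).IsWedge S T w₀ :=
  ⟨hG.union_eq, hG.inter_eq, by
    rintro u w (⟨hu, hw, -⟩ | ⟨hu, hw, -⟩)
    exacts [Or.inl ⟨hu, hw⟩, Or.inr ⟨hu, hw⟩]⟩

lemma glueGraph_induce (hH : H.IsWedge S T w₀) : glueGraph (H.induce S) (H.induce T) = H :=
  SimpleGraph.ext (glueRel_restrict hH.adj_mem)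

lemma isFlatOf_glueGraph (hG : G.IsWedge S T w₀) {H₁ : SimpleGraph S} {H₂ : SimpleGraph T}
    (h₁ : IsFlatOf (G.induce S) H₁) (h₂ : IsFlatOf (G.induce T) H₂) :
    IsFlatOf G (glueGraph H₁ H₂) := by
  have hglue := hG.isWedge_glueGraph H₁ H₂
  refine ⟨?_, fun u w huw hr => ?_⟩
  · rintro u w (⟨_, _, h⟩ | ⟨_, _, h⟩)
    exacts [h₁.1 h, h₂.1 h]
  · rcases hG.adj_mem huw with ⟨hu, hw⟩ | ⟨hu, hw⟩
    · have := hglue.reachable_induce hu hw hr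
      rw [glueGraph_induce_left hG.subsingleton_inter] at this
      exact Or.inl ⟨hu, hw, h₁.2 _ _ huw this⟩
    · have := hglue.symm.reachable_induce hu hw hr
      rw [glueGraph_induce_right hG.subsingleton_inter] at this
      exact Or.inr ⟨hu, hw, h₂.2 _ _ huw this⟩

end IsWedge

end SimpleGraph

lemma IsFlatOf.induce {V : Type} {G H : SimpleGraph V} (h : IsFlatOf G H) (s : Set V) :
    IsFlatOf (G.induce s) (H.induce s) :=
  ⟨fun _ _ hab => h.1 hab,
    fun a b hab hr => h.2 a b hab (hr.map (SimpleGraph.Embedding.induce s).toHom)⟩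

noncomputable def flatSum {V : Type} [Fintype V] (G : SimpleGraph V) : ℤ[X] :=
  ∑ᶠ H ∈ {H : SimpleGraph V | IsFlatOf G H},
    (acyclicOrientationCount (contractFlat G H) : ℤ[X]) * X ^ flatRank H

theorem SimpleGraph.IsWedge.flatSum_eq_mul {W : Type} [Fintype W] {S T : Set W} [Fintype S]
    [Fintype T] {w₀ : W} {G : SimpleGraph W} (hG : G.IsWedge S T w₀) :
    flatSum G = flatSum (G.induce S) * flatSum (G.induce T) := by
  rw [flatSum, flatSum, flatSum, finsum_mem_mul_finsum_mem (Set.toFinite _) (Set.toFinite _)]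
  refine finsum_mem_eq_of_bijOn (fun H => (H.induce S, H.induce T)) ⟨?_, ?_, ?_⟩ ?_
  · exact fun H hH => ⟨IsFlatOf.induce hH S, IsFlatOf.induce hH T⟩
  · intro H hH H' hH' h
    obtain ⟨hS, hT⟩ := Prod.ext_iff.mp h
    rw [← (hG.mono hH.1).glueGraph_induce, ← (hG.mono hH'.1).glueGraph_induce]
    exact congrArg₂ glueGraph hS hT
  · rintro ⟨H₁, H₂⟩ ⟨h₁, h₂⟩
    exact ⟨glueGraph H₁ H₂, hG.isFlatOf_glueGraph h₁ h₂, Prod.ext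
      (glueGraph_induce_left hG.subsingleton_inter H₁ H₂)
      (glueGraph_induce_right hG.subsingleton_inter H₁ H₂)⟩
  · intro H hH
    rw [hG.acyclicOrientationCount_contractFlat hH.1, (hG.mono hH.1).flatRank_eq_add]
    push_cast
    ring

/-- `∑_{F flat of Γ} a(Γ/F) q^{rk F}` is multiplicative under wedges of graphs. -/
theorem flatSum_wedge
    {V : Type} [Fintype V] [DecidableEq V] (G : SimpleGraph V) (v : V)
    (A B : Finset V) (hU : A ∪ B = Finset.univ) (hI : A ∩ B = {v})
    (hE : ∀ u w, G.Adj u w → (u ∈ A ∧ w ∈ A) ∨ (u ∈ B ∧ w ∈ B)) :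
    (∑ᶠ H ∈ {H : SimpleGraph V | IsFlatOf G H},
        (acyclicOrientationCount (contractFlat G H) : Polynomial ℤ) * X ^ flatRank H)
      = (∑ᶠ H₁ ∈ {H₁ : SimpleGraph (A : Set V) | IsFlatOf (G.induce (A : Set V)) H₁},
            (acyclicOrientationCount (contractFlat (G.induce (A : Set V)) H₁) : Polynomial ℤ)
              * X ^ flatRank H₁) *
        (∑ᶠ H₂ ∈ {H₂ : SimpleGraph (B : Set V) | IsFlatOf (G.induce (B : Set V)) H₂},
            (acyclicOrientationCount (contractFlat (G.induce (B : Set V)) H₂) : Polynomial ℤ)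
              * X ^ flatRank H₂) := by
  have hG : G.IsWedge A B v :=
    ⟨by rw [← Finset.coe_union, hU, Finset.coe_univ],
      by rw [← Finset.coe_inter, hI, Finset.coe_singleton], fun u w => hE u w⟩
  exact hG.flatSum_eq_mul
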